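/- In G(E), nonzero elements uv⁻¹ and xy⁻¹ are J-related if and only if r(u) and r(x) lie in the same strongly connected component of E; consequently the nonzero J-classes of G(E) are in bijection with the strongly connected components of E. -/

import Mathlib

universe u

/-- A directed graph: vertices, edges, source and range maps. -/
structure DGraph : Type (u + 1) where
  V : Type u
  Ed : Type u
  src : Ed → V
  rng : Ed → V

/-- The end vertex of a list of edges started at `v` (ignoring composability). -/
def DGraph.ranAux (G : DGraph) : G.V → List G.Ed → G.V
  | v, [] => v
  | _, e :: es => DGraph.ranAux G (G.rng e) es

/-- The edges `l` form a composable path starting at `v`. -/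
def DGraph.Chain (G : DGraph) : G.V → List G.Ed → Prop
  | _, [] => True
  | v, e :: es => G.src e = v ∧ DGraph.Chain G (G.rng e) es

theorem DGraph.ranAux_append (G : DGraph) (v : G.V) (l1 l2 : List G.Ed) :
    G.ranAux v (l1 ++ l2) = G.ranAux (G.ranAux v l1) l2 := by
  induction l1 generalizing v with
  | nil => rfl
  | cons e es ih => exact ih (G.rng e)

theorem DGraph.chain_append (G : DGraph) {v : G.V} {l1 l2 : List G.Ed}
    (h1 : G.Chain v l1) (h2 : G.Chain (G.ranAux v l1) l2) : G.Chain v (l1 ++ l2) := by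
  induction l1 generalizing v with
  | nil => exact h2
  | cons e es ih => exact ⟨h1.1, ih h1.2 h2⟩

theorem DGraph.chain_append_right (G : DGraph) {v : G.V} {l1 l2 : List G.Ed}
    (h : G.Chain v (l1 ++ l2)) : G.Chain (G.ranAux v l1) l2 := by
  induction l1 generalizing v with
  | nil => exact h
  | cons e es ih => exact ih h.2

/-- A (finite, directed) path in the graph `G`: a start vertex together
with a composable list of edges. Vertices are the paths of length `0`. -/
structure GPath (G : DGraph.{u}) : Type u where
  start : G.V
  edges : List G.Ed
  chain : G.Chain start edges

namespace GPath

variable {G : DGraph}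

/-- The range (end vertex) of a path. -/
def ran (p : GPath G) : G.V := G.ranAux p.start p.edges

/-- The path of length zero at a vertex. -/
def ofVertex (G : DGraph) (v : G.V) : GPath G := ⟨v, [], trivial⟩

/-- The path of length one given by an edge. -/
def ofEdge (G : DGraph) (e : G.Ed) : GPath G := ⟨G.src e, [e], ⟨rfl, trivial⟩⟩

@[simp] theorem ofVertex_ran (G : DGraph) (v : G.V) : (ofVertex G v).ran = v := rfl

@[simp] theorem ofEdge_ran (G : DGraph) (e : G.Ed) : (ofEdge G e).ran = G.rng e := rfl

/-- Concatenation of composable paths. -/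
def append (p q : GPath G) (h : p.ran = q.start) : GPath G :=
  ⟨p.start, p.edges ++ q.edges,
    G.chain_append p.chain (by
      show G.Chain (G.ranAux p.start p.edges) q.edges
      have : G.ranAux p.start p.edges = q.start := h
      rw [this]; exact q.chain)⟩

@[simp] theorem append_ran (p q : GPath G) (h : p.ran = q.start) :
    (p.append q h).ran = q.ran := by
  show G.ranAux p.start (p.edges ++ q.edges) = q.ran
  rw [G.ranAux_append]
  have : G.ranAux p.start p.edges = q.start := h
  rw [this]; rfl

/-- `y` is an initial segment of the path `p`. -/
def IsPrefixOf (y p : GPath G) : Prop := y.start = p.start ∧ y.edges <+: p.edges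

/-- The remainder `t` of `p` after its initial segment `y`, so that `p = y ++ t`. -/
def remainder (y p : GPath G) (h : y.IsPrefixOf p) : GPath G :=
  ⟨y.ran, p.edges.drop y.edges.length, by
    obtain ⟨l2, hl⟩ := h.2
    rw [← hl, List.drop_left]
    show G.Chain (G.ranAux y.start y.edges) l2
    rw [h.1]
    exact G.chain_append_right (v := p.start) (l1 := y.edges) (l2 := l2)
      (by rw [hl]; exact p.chain)⟩

@[simp] theorem remainder_ran (y p : GPath G) (h : y.IsPrefixOf p) :
    (y.remainder p h).ran = p.ran := by
  obtain ⟨l2, hl⟩ := h.2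
  show G.ranAux y.ran (p.edges.drop y.edges.length) = p.ran
  rw [← hl, List.drop_left]
  show G.ranAux (G.ranAux y.start y.edges) l2 = p.ran
  rw [h.1, ← G.ranAux_append, hl]
  rfl

end GPath

/-- The graph inverse semigroup of `G` (in normal form): its elements are zero together
with the elements `x * y⁻¹` for paths `x`, `y` with the same range. -/
inductive GIS (G : DGraph.{u}) : Type u where
  | zero : GIS G
  | mk (x y : GPath G) (h : x.ran = y.ran) : GIS G

instance (G : DGraph) : Zero (GIS G) := ⟨GIS.zero⟩

open scoped Classical in
/-- Multiplication in the graph inverse semigroup. -/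
noncomputable def GIS.gmul {G : DGraph} : GIS G → GIS G → GIS G
  | GIS.zero, _ => GIS.zero
  | GIS.mk _ _ _, GIS.zero => GIS.zero
  | GIS.mk x y hxy, GIS.mk p q hpq =>
    if h1 : y.IsPrefixOf p then
      GIS.mk (x.append (y.remainder p h1) hxy) q
        (by exact (GPath.append_ran _ _ _).trans ((GPath.remainder_ran _ _ _).trans hpq))
    else if h2 : p.IsPrefixOf y then
      GIS.mk x (q.append (p.remainder y h2) hpq.symm)
        (by exact hxy.trans ((GPath.append_ran _ _ _).trans (GPath.remainder_ran _ _ _)).symm)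
    else GIS.zero

noncomputable instance (G : DGraph) : Mul (GIS G) := ⟨GIS.gmul⟩

/-- The element of `GIS G` corresponding to a vertex `v` (i.e. `v = v * v⁻¹`). -/
def vertexEl (G : DGraph) (v : G.V) : GIS G :=
  GIS.mk (GPath.ofVertex G v) (GPath.ofVertex G v) rfl

/-- The element of `GIS G` corresponding to an edge `e` (i.e. `e = e * r(e)⁻¹`). -/
def edgeEl (G : DGraph) (e : G.Ed) : GIS G :=
  GIS.mk (GPath.ofEdge G e) (GPath.ofVertex G (G.rng e)) rfl

/-- The inverse operation on `GIS G`: `(x y⁻¹)⁻¹ = y x⁻¹`. -/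
def GIS.inv {G : DGraph} : GIS G → GIS G
  | GIS.zero => GIS.zero
  | GIS.mk x y h => GIS.mk y x h.symm

/-- `a` lies in the principal left ideal generated by `b` (`S¹a ⊆ S¹b`). -/
def GreenLeL {G : DGraph} (a b : GIS G) : Prop := a = b ∨ ∃ c, a = c * b

/-- `a` lies in the principal right ideal generated by `b` (`aS¹ ⊆ bS¹`). -/
def GreenLeR {G : DGraph} (a b : GIS G) : Prop := a = b ∨ ∃ c, a = b * c

/-- `a` lies in the principal two-sided ideal generated by `b` (`S¹aS¹ ⊆ S¹bS¹`). -/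
def GreenLeJ {G : DGraph} (a b : GIS G) : Prop :=
  a = b ∨ (∃ c, a = c * b) ∨ (∃ c, a = b * c) ∨ (∃ c d, a = c * b * d)

/-- Green's `L`-relation. -/
def GreenEqL {G : DGraph} (a b : GIS G) : Prop := GreenLeL a b ∧ GreenLeL b a

/-- Green's `R`-relation. -/
def GreenEqR {G : DGraph} (a b : GIS G) : Prop := GreenLeR a b ∧ GreenLeR b a

/-- Green's `J`-relation. -/
def GreenEqJ {G : DGraph} (a b : GIS G) : Prop := GreenLeJ a b ∧ GreenLeJ b a

/-- There is a (possibly trivial) directed path from `v` to `w` in `G`. -/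
def GConnected (G : DGraph) (v w : G.V) : Prop := ∃ t : GPath G, t.start = v ∧ t.ran = w

/-- `I` is a (two-sided) ideal of `GIS G`. -/
def GISIdeal {G : DGraph} (I : Set (GIS G)) : Prop :=
  ∀ a ∈ I, ∀ c : GIS G, a * c ∈ I ∧ c * a ∈ I

/-- `R` is the Rees congruence of some ideal `I`, i.e. `R = (I × I) ∪ Δ`. -/
def IsReesCon {G : DGraph} (R : Con (GIS G)) : Prop :=
  ∃ I : Set (GIS G), GISIdeal I ∧ ∀ a b : GIS G, R a b ↔ (a ∈ I ∧ b ∈ I) ∨ a = b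

/-- The only congruences on `GIS G` are the universal one and the diagonal. -/
def CongFree (G : DGraph) : Prop :=
  ∀ R : Con (GIS G), (∀ a b : GIS G, R a b) ∨ (∀ a b : GIS G, R a b ↔ a = b)

/-- The natural partial order on the inverse semigroup `GIS G`:
`a ≤ b` iff `a = ε * b` for some idempotent `ε`. -/
def natLe {G : DGraph} (a b : GIS G) : Prop := ∃ ε : GIS G, ε * ε = ε ∧ a = ε * b

/-- The graph obtained from `G` by deleting the vertices in `S` and all
edges incident to them. -/
def DGraph.delete (G : DGraph) (S : Set G.V) : DGraph where
  V := {v : G.V // v ∉ S}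
  Ed := {e : G.Ed // G.src e ∉ S ∧ G.rng e ∉ S}
  src e := ⟨G.src e.1, e.2.1⟩
  rng e := ⟨G.rng e.1, e.2.2⟩

/-- The graph with a single vertex and `n` loops; its graph inverse semigroup
is the polycyclic monoid `Pₙ`. -/
def polyGraph (n : ℕ) : DGraph :=
  ⟨PUnit, Fin n, fun _ => PUnit.unit, fun _ => PUnit.unit⟩

/-! In a nonzero product `a * (x y⁻¹)` or `(x y⁻¹) * a`, written `u v⁻¹`, the vertex `r(u)` is
either `r(x)` or the end of a remainder path starting at `r(x)`, so `u v⁻¹ ≤_J x y⁻¹` yields a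
path from `r(x)` to `r(u)`. Conversely, a path `t` from `r(x)` to `r(u)` gives
`u v⁻¹ = (u (x t)⁻¹) (x y⁻¹) ((y t) v⁻¹)`. -/

variable {G : DGraph} {u v x y : GPath G}

theorem GPath.ext {p q : GPath G} (h1 : p.start = q.start) (h2 : p.edges = q.edges) :
    p = q := by
  cases p; cases q; cases h1; cases h2; rfl

@[simp] theorem GPath.append_edges (p q : GPath G) (h : p.ran = q.start) :
    (p.append q h).edges = p.edges ++ q.edges := rfl

theorem GPath.isPrefixOf_append (p t : GPath G) (h : p.ran = t.start) :
    p.IsPrefixOf (p.append t h) :=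
  ⟨rfl, t.edges, rfl⟩

theorem GPath.isPrefixOf_refl (p : GPath G) : p.IsPrefixOf p := ⟨rfl, List.prefix_refl _⟩

theorem GConnected.refl (v : G.V) : GConnected G v v := ⟨GPath.ofVertex G v, rfl, rfl⟩

theorem GConnected.of_eq {v w : G.V} (h : v = w) : GConnected G v w := h ▸ .refl v

theorem GConnected.trans {v w z : G.V} (h1 : GConnected G v w) (h2 : GConnected G w z) :
    GConnected G v z := by
  obtain ⟨t1, rfl, rfl⟩ := h1
  obtain ⟨t2, h2s, rfl⟩ := h2
  exact ⟨t1.append t2 h2s.symm, rfl, GPath.append_ran _ _ _⟩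

theorem GPath.IsPrefixOf.gConnected_ran {y p : GPath G} (h : y.IsPrefixOf p) :
    GConnected G y.ran p.ran :=
  ⟨y.remainder p h, rfl, GPath.remainder_ran _ _ _⟩

namespace GIS

theorem mk_eq_mk {x' y' : GPath G} {h : x.ran = y.ran} {h' : x'.ran = y'.ran}
    (hx : x = x') (hy : y = y') : GIS.mk x y h = GIS.mk x' y' h' := by
  subst hx hy; rfl

theorem exists_eq_mk_of_ne_zero {a : GIS G} (ha : a ≠ 0) :
    ∃ (x y : GPath G) (h : x.ran = y.ran), a = GIS.mk x y h := by
  cases a with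
  | zero => exact absurd rfl ha
  | mk x y h => exact ⟨x, y, h, rfl⟩

theorem mk_ne_zero (h : x.ran = y.ran) : GIS.mk x y h ≠ 0 := nofun

open scoped Classical in
theorem mk_mul_mk {p q : GPath G} (hxy : x.ran = y.ran) (hpq : p.ran = q.ran) :
    GIS.mk x y hxy * GIS.mk p q hpq =
      if h1 : y.IsPrefixOf p then
        GIS.mk (x.append (y.remainder p h1) hxy) q
          ((GPath.append_ran _ _ _).trans ((GPath.remainder_ran _ _ _).trans hpq))
      else if h2 : p.IsPrefixOf y then
        GIS.mk x (q.append (p.remainder y h2) hpq.symm)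
          (hxy.trans ((GPath.append_ran _ _ _).trans (GPath.remainder_ran _ _ _)).symm)
      else GIS.zero := rfl

theorem mk_mul_mk_self {w : GPath G} (huv : u.ran = v.ran) (hvw : v.ran = w.ran) :
    GIS.mk u v huv * GIS.mk v w hvw = GIS.mk u w (huv.trans hvw) := by
  rw [mk_mul_mk, dif_pos v.isPrefixOf_refl]
  refine mk_eq_mk (GPath.ext rfl ?_) rfl
  show u.edges ++ v.edges.drop v.edges.length = u.edges
  simp

theorem mk_append_mul_mk {t : GPath G} (h : x.ran = t.start) (hxy : x.ran = y.ran)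
    (hu : u.ran = (x.append t h).ran) (hu' : u.ran = (y.append t (hxy.symm.trans h)).ran) :
    GIS.mk u (x.append t h) hu * GIS.mk x y hxy
      = GIS.mk u (y.append t (hxy.symm.trans h)) hu' := by
  rw [mk_mul_mk]
  split_ifs with hxt hx
  · have ht : t.edges = [] := by
      have := hxt.2.length_le
      simp only [GPath.append_edges, List.length_append] at this
      exact List.eq_nil_of_length_eq_zero (by omega)
    refine mk_eq_mk (GPath.ext rfl ?_) (GPath.ext rfl ?_)
    · show u.edges ++ x.edges.drop (x.edges ++ t.edges).length = u.edges
      simp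
    · show y.edges = y.edges ++ t.edges
      simp [ht]
  · refine mk_eq_mk rfl (GPath.ext rfl ?_)
    show y.edges ++ (x.edges ++ t.edges).drop x.edges.length = y.edges ++ t.edges
    simp
  · exact (hx (GPath.isPrefixOf_append x t h)).elim

theorem gConnected_of_mk_mul_eq_mk {a : GIS G} {hxy : x.ran = y.ran} {huv : u.ran = v.ran}
    (h : GIS.mk x y hxy * a = GIS.mk u v huv) : GConnected G x.ran u.ran := by
  cases a with
  | zero => cases h
  | mk p q hpq =>
    rw [mk_mul_mk] at h
    split_ifs at h with hyp
    · cases h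
      exact (GConnected.of_eq hxy).trans <| hyp.gConnected_ran.trans <|
        .of_eq ((GPath.append_ran _ _ _).trans (GPath.remainder_ran _ _ _)).symm
    · cases h
      exact .refl _

theorem gConnected_of_mul_mk_eq_mk {a : GIS G} {hxy : x.ran = y.ran} {huv : u.ran = v.ran}
    (h : a * GIS.mk x y hxy = GIS.mk u v huv) : GConnected G x.ran u.ran := by
  cases a with
  | zero => cases h
  | mk p q hpq =>
    rw [mk_mul_mk] at h
    split_ifs at h with hqx hxq
    · cases h
      exact .of_eq (hxy.trans huv.symm)
    · cases h
      rw [hpq, ← GPath.remainder_ran _ _ hxq]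
      exact ⟨_, rfl, rfl⟩

theorem greenLeJ_mk_mk_iff (huv : u.ran = v.ran) (hxy : x.ran = y.ran) :
    GreenLeJ (GIS.mk u v huv) (GIS.mk x y hxy) ↔ GConnected G x.ran u.ran := by
  constructor
  · rintro (h | ⟨c, h⟩ | ⟨c, h⟩ | ⟨c, d, h⟩)
    · cases h
      exact .refl _
    · exact gConnected_of_mul_mk_eq_mk h.symm
    · exact gConnected_of_mk_mul_eq_mk h.symm
    · obtain ⟨u', v', hu', hc⟩ := exists_eq_mk_of_ne_zero (a := c * GIS.mk x y hxy) fun h0 => by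
        rw [h0] at h
        cases h
      rw [hc] at h
      exact (gConnected_of_mul_mk_eq_mk hc).trans (gConnected_of_mk_mul_eq_mk h.symm)
  · rintro ⟨t, ht, htu⟩
    have hxt : x.ran = t.start := ht.symm
    have hut : u.ran = (x.append t hxt).ran := by rw [GPath.append_ran, htu]
    have hut' : u.ran = (y.append t (hxy.symm.trans hxt)).ran := by rw [GPath.append_ran, htu]
    refine Or.inr <| Or.inr <| Or.inr ⟨GIS.mk u (x.append t hxt) hut,
      GIS.mk (y.append t (hxy.symm.trans hxt)) v (hut'.symm.trans huv), ?_⟩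
    rw [mk_append_mul_mk hxt hxy hut hut', mk_mul_mk_self]

theorem greenEqJ_mk_mk_iff (huv : u.ran = v.ran) (hxy : x.ran = y.ran) :
    GreenEqJ (GIS.mk u v huv) (GIS.mk x y hxy) ↔
      GConnected G u.ran x.ran ∧ GConnected G x.ran u.ran := by
  rw [GreenEqJ, greenLeJ_mk_mk_iff, greenLeJ_mk_mk_iff, and_comm]

def ranVertex : {a : GIS G // a ≠ 0} → G.V
  | ⟨GIS.zero, h⟩ => absurd rfl h
  | ⟨GIS.mk u _ _, _⟩ => u.ran

end GIS

/-- Nonzero elements `uv⁻¹` and `xy⁻¹` of `G(E)` are `J`-related iff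
`r(u)` and `r(x)` lie in the same strongly connected component of `E`; consequently the
nonzero `J`-classes of `G(E)` are in bijection with the strongly connected components
of `E`. -/
theorem stmt7 (G : DGraph) :
    (∀ (u v x y : GPath G) (hu : u.ran = v.ran) (hx : x.ran = y.ran),
      GreenEqJ (GIS.mk u v hu) (GIS.mk x y hx) ↔
        (GConnected G u.ran x.ran ∧ GConnected G x.ran u.ran)) ∧
    ∃ F : {mu : GIS G // mu ≠ 0} → G.V,
      (∀ mu nu : {mu : GIS G // mu ≠ 0},
        (GConnected G (F mu) (F nu) ∧ GConnected G (F nu) (F mu)) ↔ GreenEqJ mu.1 nu.1) ∧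
      (∀ v : G.V, ∃ mu : {mu : GIS G // mu ≠ 0},
        GConnected G (F mu) v ∧ GConnected G v (F mu)) := by
  refine ⟨fun u v x y => GIS.greenEqJ_mk_mk_iff, GIS.ranVertex, ?_, fun v =>
    ⟨⟨vertexEl G v, GIS.mk_ne_zero rfl⟩, .refl v, .refl v⟩⟩
  rintro ⟨mu, hmu⟩ ⟨nu, hnu⟩
  obtain ⟨u, v, hu, rfl⟩ := GIS.exists_eq_mk_of_ne_zero hmu
  obtain ⟨x, y, hx, rfl⟩ := GIS.exists_eq_mk_of_ne_zero hnu
  exact (GIS.greenEqJ_mk_mk_iff hu hx).symm
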